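/- For t ≥ 0 and β ∈ ℝ, the pressure P(t,β) := lim_n (1/n) log ∑_{ω∈ℕ^n} q_n(ω)^{−2t} ∏ ω_i^{−2β} satisfies the upper bound P(t,β) ≤ (1/2) log ∑_{(k,l)∈ℕ²} (kl)^{−2(t+β)} (1 + 1/(k(l+1)))^{−2t}. -/

import Mathlib

open Filter ENNReal

/-- Denominators of the convergents: `q_n = ω_n q_{n-1} + q_{n-2}`, `q_{-1} = 0`, `q_0 = 1`. -/
def qRec (a : ℕ → ℕ) : ℕ → ℕ
  | 0 => 1
  | 1 => a 1
  | n + 2 => a (n + 2) * qRec a (n + 1) + qRec a n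

/-- The continued fraction denominator `q_n(ω)` of a finite word `ω ∈ ℕ^n`. -/
def wordQ {n : ℕ} (w : Fin n → ℕ+) : ℕ :=
  qRec (fun i => if h : 1 ≤ i ∧ i ≤ n then (w ⟨i - 1, by omega⟩ : ℕ) else 1) n

/-- The `n`-th partition function `Z_n(t,β) = ∑_{ω ∈ ℕ^n} q_n(ω)^{−2t} ∏ ω_i^{−2β}`,
valued in `[0,∞]`. -/
noncomputable def Zpart (t β : ℝ) (n : ℕ) : ℝ≥0∞ :=
  ∑' w : Fin n → ℕ+,
    ((wordQ w : ℝ≥0∞)) ^ (-2 * t) * ∏ i : Fin n, (((w i : ℕ) : ℝ≥0∞)) ^ (-2 * β)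

/-!
Appending two digits `c, d` to a word gives `q_{n+2} = d q_{n+1} + q_n ≥ (cd + 1) q_n`, and
`cd + 1` dominates the factor `kl (1 + 1/(k(l+1)))` with `(k, l) = (d, c)`. Hence
`Z_{n+2} ≤ Z_n S`, where `S` is the sum in the bound, so `Z_{2m} ≤ S^m` and the limit is at
most `(1/2) log S`.

If `S = ∞`, the real sum is `0` by convention, and we show that the limit is `0` too:
`S ≤ T²` for `T = ∑ k^{-2(t+β)}`, while `q_{n+1} ≤ 2 ω_{n+1} q_n` gives `Z_{n+1} ≥ 2^{-2t} T Z_n`,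
so `Z_n = ∞` for every `n ≥ 1`, and `∞.toReal = 0`.
-/

section Continuant

variable {a : ℕ → ℕ}

theorem qRec_add_two (n : ℕ) :
    qRec a (n + 2) = a (n + 2) * qRec a (n + 1) + qRec a n := rfl

theorem qRec_congr {b : ℕ → ℕ} : ∀ {n : ℕ}, (∀ i ≤ n, a i = b i) → qRec a n = qRec b n
  | 0, _ => rfl
  | 1, h => h 1 le_rfl
  | n + 2, h => by
    rw [qRec_add_two, qRec_add_two, h (n + 2) le_rfl, qRec_congr fun i hi => h i (by omega),
      qRec_congr fun i hi => h i (by omega)]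

theorem mul_qRec_le_qRec_succ : ∀ n, a (n + 1) * qRec a n ≤ qRec a (n + 1)
  | 0 => (mul_one _).le
  | _ + 1 => Nat.le_add_right _ _

variable (ha : ∀ i, 1 ≤ a i)
include ha

theorem qRec_le_qRec_succ : ∀ n, qRec a n ≤ qRec a (n + 1)
  | 0 => ha 1
  | _ + 1 => (Nat.le_mul_of_pos_left _ (ha _)).trans (Nat.le_add_right _ _)

theorem qRec_succ_le_mul : ∀ n, qRec a (n + 1) ≤ (a (n + 1) + 1) * qRec a n
  | 0 => by simp [qRec]
  | n + 1 => by
    rw [qRec_add_two, add_one_mul]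
    exact Nat.add_le_add_left (qRec_le_qRec_succ ha n) _

end Continuant

section Word

variable {n : ℕ} (w : Fin n → ℕ+) (c d : ℕ+)

def wordDigit (i : ℕ) : ℕ :=
  if h : 1 ≤ i ∧ i ≤ n then (w ⟨i - 1, by omega⟩ : ℕ) else 1

theorem wordQ_eq_qRec : wordQ w = qRec (wordDigit w) n := rfl

theorem one_le_wordDigit (i : ℕ) : 1 ≤ wordDigit w i := by
  unfold wordDigit
  split
  · exact (w _).pos
  · exact le_rfl

theorem wordDigit_snoc_of_le {i : ℕ} (hi : i ≤ n) :
    wordDigit (Fin.snoc w c) i = wordDigit w i := by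
  unfold wordDigit
  by_cases h : 1 ≤ i
  · rw [dif_pos ⟨h, by omega⟩, dif_pos ⟨h, hi⟩]
    simp [Fin.snoc, show i - 1 < n by omega]
  · rw [dif_neg (by omega), dif_neg (by omega)]

theorem wordDigit_snoc_last : wordDigit (Fin.snoc w c) (n + 1) = c := by
  simp [wordDigit, Fin.snoc]

theorem qRec_wordDigit_snoc {m : ℕ} (hm : m ≤ n) :
    qRec (wordDigit (Fin.snoc w c)) m = qRec (wordDigit w) m :=
  qRec_congr fun _ hi => wordDigit_snoc_of_le w c (hi.trans hm)

theorem wordQ_snoc_le : wordQ (Fin.snoc w c) ≤ (c + 1) * wordQ w := by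
  have h := qRec_succ_le_mul (one_le_wordDigit (Fin.snoc w c)) n
  rwa [wordDigit_snoc_last, qRec_wordDigit_snoc w c le_rfl] at h

theorem mul_wordQ_le_wordQ_snoc : c * wordQ w ≤ wordQ (Fin.snoc w c) := by
  have h := mul_qRec_le_qRec_succ (a := wordDigit (Fin.snoc w c)) n
  rwa [wordDigit_snoc_last, qRec_wordDigit_snoc w c le_rfl] at h

theorem wordQ_snoc_snoc :
    wordQ (Fin.snoc (Fin.snoc w c) d) = d * wordQ (Fin.snoc w c) + wordQ w := by
  rw [wordQ_eq_qRec, qRec_add_two, wordDigit_snoc_last, qRec_wordDigit_snoc _ d le_rfl,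
    qRec_wordDigit_snoc _ d n.le_succ, qRec_wordDigit_snoc w c le_rfl]
  rfl

theorem mul_wordQ_le_wordQ_snoc_snoc :
    (c * d + 1) * wordQ w ≤ wordQ (Fin.snoc (Fin.snoc w c) d) := by
  rw [wordQ_snoc_snoc]
  calc (c * d + 1) * wordQ w = d * (c * wordQ w) + wordQ w := by ring
    _ ≤ _ := by gcongr; exact mul_wordQ_le_wordQ_snoc w c

end Word

theorem ENNReal.rpow_le_rpow_of_nonpos {x y : ℝ≥0∞} {z : ℝ} (hxy : x ≤ y) (hz : z ≤ 0) :
    y ^ z ≤ x ^ z := by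
  have h := ENNReal.inv_le_inv.2 (ENNReal.rpow_le_rpow hxy (neg_nonneg.2 hz))
  rwa [← ENNReal.rpow_neg, ← ENNReal.rpow_neg, neg_neg] at h

theorem ENNReal.tsum_pi_fin_succ {α : Type*} {n : ℕ} (f : (Fin (n + 1) → α) → ℝ≥0∞) :
    ∑' v, f v = ∑' (w : Fin n → α) (c : α), f (Fin.snoc w c) := by
  rw [← (Fin.snocEquiv fun _ => α).tsum_eq, ENNReal.tsum_prod', ENNReal.tsum_comm]
  rfl

section PairWeight

noncomputable def pairFactor (k l : ℝ) : ℝ := k * l * (1 + 1 / (k * (l + 1)))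

theorem pairFactor_pos {k l : ℝ} (hk : 0 < k) (hl : 0 < l) : 0 < pairFactor k l := by
  unfold pairFactor; positivity

theorem pairFactor_le {k l : ℝ} (hk : 0 < k) (hl : 0 < l) : pairFactor k l ≤ k * l + 1 := by
  have h : k * l * (1 / (k * (l + 1))) = l / (l + 1) := by field_simp
  rw [pairFactor, mul_add, mul_one, h, add_le_add_iff_left, div_le_one (by positivity)]
  linarith

variable (t β : ℝ)

/-- `p = (k, l)` stands for a pair `(ω_i, ω_{i-1})` of consecutive digits. -/
noncomputable def pairWeight (p : ℕ+ × ℕ+) : ℝ :=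
  (((p.1 : ℕ) : ℝ) * ((p.2 : ℕ) : ℝ)) ^ (-2 * (t + β)) *
    (1 + 1 / (((p.1 : ℕ) : ℝ) * (((p.2 : ℕ) : ℝ) + 1))) ^ (-2 * t)

theorem pairWeight_eq (p : ℕ+ × ℕ+) :
    pairWeight t β p =
      pairFactor p.1 p.2 ^ (-2 * t) * (((p.1 : ℕ) : ℝ) * ((p.2 : ℕ) : ℝ)) ^ (-2 * β) := by
  have hkl : (0 : ℝ) < ((p.1 : ℕ) : ℝ) * ((p.2 : ℕ) : ℝ) := by positivity
  rw [pairWeight, pairFactor, Real.mul_rpow hkl.le (by positivity),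
    show -2 * (t + β) = -2 * t + -2 * β by ring, Real.rpow_add hkl]
  ring

theorem ofReal_pairWeight (p : ℕ+ × ℕ+) :
    ENNReal.ofReal (pairWeight t β p) = ENNReal.ofReal (pairFactor p.1 p.2) ^ (-2 * t) *
      ((p.1 : ℕ) : ℝ≥0∞) ^ (-2 * β) * ((p.2 : ℕ) : ℝ≥0∞) ^ (-2 * β) := by
  have hk : (0 : ℝ) < (p.1 : ℕ) := by positivity
  have hl : (0 : ℝ) < (p.2 : ℕ) := by positivity
  rw [pairWeight_eq, Real.mul_rpow hk.le hl.le,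
    ENNReal.ofReal_mul (Real.rpow_nonneg (pairFactor_pos hk hl).le _),
    ENNReal.ofReal_mul (by positivity), ← ENNReal.ofReal_rpow_of_pos (pairFactor_pos hk hl),
    ← ENNReal.ofReal_rpow_of_pos hk, ← ENNReal.ofReal_rpow_of_pos hl, ENNReal.ofReal_natCast,
    ENNReal.ofReal_natCast, mul_assoc]

theorem ofReal_pairWeight_le (ht : 0 ≤ t) (p : ℕ+ × ℕ+) :
    ENNReal.ofReal (pairWeight t β p) ≤
      ((p.1 : ℕ) : ℝ≥0∞) ^ (-2 * (t + β)) * ((p.2 : ℕ) : ℝ≥0∞) ^ (-2 * (t + β)) := by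
  have hk : (0 : ℝ) < (p.1 : ℕ) := by positivity
  have hl : (0 : ℝ) < (p.2 : ℕ) := by positivity
  have h : pairWeight t β p ≤ (((p.1 : ℕ) : ℝ) * ((p.2 : ℕ) : ℝ)) ^ (-2 * (t + β)) :=
    mul_le_of_le_one_right (by positivity)
      (Real.rpow_le_one_of_one_le_of_nonpos (le_add_of_nonneg_right (by positivity))
        (by linarith))
  refine (ENNReal.ofReal_le_ofReal h).trans_eq ?_
  rw [Real.mul_rpow hk.le hl.le, ENNReal.ofReal_mul (by positivity),
    ← ENNReal.ofReal_rpow_of_pos hk, ← ENNReal.ofReal_rpow_of_pos hl, ENNReal.ofReal_natCast,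
    ENNReal.ofReal_natCast]

end PairWeight

section PartitionFunction

variable (t β : ℝ) {n : ℕ}

noncomputable def digitWeight (w : Fin n → ℕ+) : ℝ≥0∞ :=
  ∏ i, ((w i : ℕ) : ℝ≥0∞) ^ (-2 * β)

noncomputable def wordWeight (w : Fin n → ℕ+) : ℝ≥0∞ :=
  (wordQ w : ℝ≥0∞) ^ (-2 * t) * digitWeight β w

noncomputable def powSum (z : ℝ) : ℝ≥0∞ :=
  ∑' k : ℕ+, ((k : ℕ) : ℝ≥0∞) ^ z

theorem Zpart_eq_tsum_wordWeight (n : ℕ) : Zpart t β n = ∑' w : Fin n → ℕ+, wordWeight t β w :=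
  rfl

theorem digitWeight_snoc (w : Fin n → ℕ+) (c : ℕ+) :
    digitWeight β (Fin.snoc w c) = digitWeight β w * ((c : ℕ) : ℝ≥0∞) ^ (-2 * β) := by
  simp [digitWeight, Fin.prod_univ_castSucc]

theorem Zpart_zero : Zpart t β 0 = 1 := by
  simp [Zpart_eq_tsum_wordWeight, wordWeight, digitWeight, wordQ, qRec]

theorem Zpart_succ (n : ℕ) :
    Zpart t β (n + 1) = ∑' (w : Fin n → ℕ+) (c : ℕ+), wordWeight t β (Fin.snoc w c) :=
  ENNReal.tsum_pi_fin_succ _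

theorem mul_wordWeight_le_wordWeight_snoc (ht : 0 ≤ t) (w : Fin n → ℕ+) (c : ℕ+) :
    2 ^ (-2 * t) * ((c : ℕ) : ℝ≥0∞) ^ (-2 * (t + β)) * wordWeight t β w ≤
      wordWeight t β (Fin.snoc w c) := by
  have hq : (wordQ (Fin.snoc w c) : ℝ≥0∞) ≤ 2 * (c : ℕ) * wordQ w := by
    have h := wordQ_snoc_le w c
    have hc : (c : ℕ) + 1 ≤ 2 * c := by have := c.pos; omega
    exact_mod_cast h.trans (Nat.mul_le_mul_right _ hc)
  have hc0 : ((c : ℕ) : ℝ≥0∞) ≠ 0 := by simp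
  calc 2 ^ (-2 * t) * ((c : ℕ) : ℝ≥0∞) ^ (-2 * (t + β)) * wordWeight t β w
      = (2 * (c : ℕ) * wordQ w : ℝ≥0∞) ^ (-2 * t) *
          (digitWeight β w * ((c : ℕ) : ℝ≥0∞) ^ (-2 * β)) := by
        rw [ENNReal.mul_rpow_of_ne_top (by simp [ENNReal.mul_eq_top]) (by simp),
          ENNReal.mul_rpow_of_ne_top (by simp) (by simp), mul_add,
          ENNReal.rpow_add _ _ hc0 (by simp), wordWeight]
        ring
    _ ≤ wordWeight t β (Fin.snoc w c) := by
        rw [wordWeight, digitWeight_snoc]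
        exact mul_le_mul_left (ENNReal.rpow_le_rpow_of_nonpos hq (by linarith)) _

theorem wordWeight_snoc_snoc_le (ht : 0 ≤ t) (w : Fin n → ℕ+) (c d : ℕ+) :
    wordWeight t β (Fin.snoc (Fin.snoc w c) d) ≤
      wordWeight t β w * ENNReal.ofReal (pairWeight t β (d, c)) := by
  have hF : (wordQ w : ℝ≥0∞) * ENNReal.ofReal (pairFactor d c) ≤
      wordQ (Fin.snoc (Fin.snoc w c) d) := by
    have hle : ENNReal.ofReal (pairFactor d c) ≤ ((c * d + 1 : ℕ) : ℝ≥0∞) := by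
      rw [← ENNReal.ofReal_natCast]
      refine ENNReal.ofReal_le_ofReal ((pairFactor_le (by positivity) (by positivity)).trans ?_)
      push_cast; linarith
    calc (wordQ w : ℝ≥0∞) * ENNReal.ofReal (pairFactor d c)
        ≤ (wordQ w : ℝ≥0∞) * ((c * d + 1 : ℕ) : ℝ≥0∞) := by gcongr
      _ ≤ wordQ (Fin.snoc (Fin.snoc w c) d) := by
        rw [mul_comm]; exact_mod_cast mul_wordQ_le_wordQ_snoc_snoc w c d
  calc wordWeight t β (Fin.snoc (Fin.snoc w c) d)
      ≤ ((wordQ w : ℝ≥0∞) * ENNReal.ofReal (pairFactor d c)) ^ (-2 * t) *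
          (digitWeight β w * ((c : ℕ) : ℝ≥0∞) ^ (-2 * β) * ((d : ℕ) : ℝ≥0∞) ^ (-2 * β)) := by
        rw [wordWeight, digitWeight_snoc, digitWeight_snoc]
        exact mul_le_mul_left (ENNReal.rpow_le_rpow_of_nonpos hF (by linarith)) _
    _ = wordWeight t β w * ENNReal.ofReal (pairWeight t β (d, c)) := by
        rw [ENNReal.mul_rpow_of_ne_top (by simp) ENNReal.ofReal_ne_top, ofReal_pairWeight,
          wordWeight]
        ring

theorem mul_Zpart_le_Zpart_succ (ht : 0 ≤ t) (n : ℕ) :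
    2 ^ (-2 * t) * powSum (-2 * (t + β)) * Zpart t β n ≤ Zpart t β (n + 1) := by
  rw [Zpart_succ, Zpart_eq_tsum_wordWeight, ← ENNReal.tsum_mul_left]
  refine ENNReal.tsum_le_tsum fun w => ?_
  rw [powSum, ← ENNReal.tsum_mul_left, ← ENNReal.tsum_mul_right]
  exact ENNReal.tsum_le_tsum fun c => mul_wordWeight_le_wordWeight_snoc t β ht w c

theorem Zpart_add_two_le (ht : 0 ≤ t) (n : ℕ) :
    Zpart t β (n + 2) ≤ Zpart t β n * ∑' p, ENNReal.ofReal (pairWeight t β p) := by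
  rw [Zpart_succ, ENNReal.tsum_pi_fin_succ, Zpart_eq_tsum_wordWeight, ← ENNReal.tsum_mul_right]
  refine ENNReal.tsum_le_tsum fun w => ?_
  rw [← (Equiv.prodComm ℕ+ ℕ+).tsum_eq, ENNReal.tsum_prod', ← ENNReal.tsum_mul_left]
  refine ENNReal.tsum_le_tsum fun c => ?_
  rw [← ENNReal.tsum_mul_left]
  exact ENNReal.tsum_le_tsum fun d => wordWeight_snoc_snoc_le t β ht w c d

theorem pow_le_Zpart (ht : 0 ≤ t) (n : ℕ) :
    (2 ^ (-2 * t) * powSum (-2 * (t + β))) ^ n ≤ Zpart t β n := by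
  induction n with
  | zero => rw [pow_zero, Zpart_zero]
  | succ n ih =>
    rw [pow_succ']
    exact (mul_le_mul_right ih _).trans (mul_Zpart_le_Zpart_succ t β ht n)

theorem Zpart_two_mul_le (ht : 0 ≤ t) (m : ℕ) :
    Zpart t β (2 * m) ≤ (∑' p, ENNReal.ofReal (pairWeight t β p)) ^ m := by
  induction m with
  | zero => rw [mul_zero, Zpart_zero, pow_zero]
  | succ m ih =>
    rw [mul_add_one, pow_succ]
    exact (Zpart_add_two_le t β ht _).trans (mul_le_mul_left ih _)

theorem Zpart_pos (ht : 0 ≤ t) (n : ℕ) : 0 < Zpart t β n := by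
  refine lt_of_lt_of_le (ENNReal.pow_pos ?_ n) (pow_le_Zpart t β ht n)
  have h1 : (1 : ℝ≥0∞) ≤ powSum (-2 * (t + β)) :=
    le_of_eq_of_le (by simp) (ENNReal.le_tsum 1)
  exact ENNReal.mul_pos (by simp) (zero_lt_one.trans_le h1).ne'

theorem tsum_ofReal_pairWeight_le (ht : 0 ≤ t) :
    ∑' p, ENNReal.ofReal (pairWeight t β p) ≤ powSum (-2 * (t + β)) * powSum (-2 * (t + β)) := by
  rw [powSum, ← ENNReal.tsum_mul_right]
  simp_rw [← ENNReal.tsum_mul_left]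
  rw [← ENNReal.tsum_prod]
  exact ENNReal.tsum_le_tsum (ofReal_pairWeight_le t β ht)

theorem Zpart_eq_top (ht : 0 ≤ t) (hS : ∑' p, ENNReal.ofReal (pairWeight t β p) = ⊤)
    {n : ℕ} (hn : n ≠ 0) : Zpart t β n = ⊤ := by
  have hT : powSum (-2 * (t + β)) = ⊤ := by
    have h := top_le_iff.1 (hS ▸ tsum_ofReal_pairWeight_le t β ht)
    rcases ENNReal.mul_eq_top.1 h with h | h
    exacts [h.2, h.1]
  refine top_le_iff.1 ((le_of_eq ?_).trans (pow_le_Zpart t β ht n))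
  rw [hT, ENNReal.mul_top (by simp), ENNReal.top_pow hn]

end PartitionFunction

theorem le_log_div_of_tendsto_log_div {z : ℕ → ℝ≥0∞} {s : ℝ≥0∞} {L : ℝ} {k : ℕ} (hk : 0 < k)
    (hs : s ≠ ⊤) (hz : ∀ n, 0 < z n) (hzs : ∀ m, z (k * m) ≤ s ^ m)
    (hL : Tendsto (fun n : ℕ => Real.log (z n).toReal / n) atTop (nhds L)) :
    L ≤ Real.log s.toReal / k := by
  have hkm : Tendsto (fun m : ℕ => k * m) atTop atTop :=
    tendsto_id.const_mul_atTop' hk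
  refine le_of_tendsto (hL.comp hkm) (eventually_atTop.2 ⟨1, fun m hm => ?_⟩)
  have hzm : z (k * m) ≠ ⊤ := ne_top_of_le_ne_top (ENNReal.pow_ne_top hs) (hzs m)
  have hlog : Real.log (z (k * m)).toReal ≤ m * Real.log s.toReal := by
    rw [← Real.log_pow, ← ENNReal.toReal_pow]
    exact Real.log_le_log (ENNReal.toReal_pos (hz _).ne' hzm)
      ((ENNReal.toReal_le_toReal hzm (ENNReal.pow_ne_top hs)).2 (hzs m))
  have hm0 : (0 : ℝ) < m := by exact_mod_cast hm
  have hk0 : (0 : ℝ) < k := by exact_mod_cast hk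
  calc Real.log (z (k * m)).toReal / ((k * m : ℕ) : ℝ)
      ≤ m * Real.log s.toReal / (k * m) := by push_cast; gcongr
    _ = Real.log s.toReal / k := by field_simp

/-- Upper bound for the pressure: for `t ≥ 0`,
`P(t,β) ≤ (1/2) log ∑_{(k,l)∈ℕ²} (kl)^{−2(t+β)} (1 + 1/(k(l+1)))^{−2t}`. -/
theorem pressure_upper_bound (t β : ℝ) (ht : 0 ≤ t) (L : ℝ)
    (hL : Tendsto (fun n : ℕ => Real.log (Zpart t β n).toReal / n) atTop (nhds L)) :
    L ≤ (1 / 2) * Real.log (∑' p : ℕ+ × ℕ+,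
        (((p.1 : ℕ) : ℝ) * ((p.2 : ℕ) : ℝ)) ^ (-2 * (t + β)) *
          (1 + 1 / (((p.1 : ℕ) : ℝ) * (((p.2 : ℕ) : ℝ) + 1))) ^ (-2 * t)) := by
  set S := ∑' p, ENNReal.ofReal (pairWeight t β p)
  have hS : ∑' p, pairWeight t β p = S.toReal := by
    rw [ENNReal.tsum_toReal_eq fun _ => ENNReal.ofReal_ne_top]
    exact tsum_congr fun p => (ENNReal.toReal_ofReal (by rw [pairWeight]; positivity)).symm
  change L ≤ 1 / 2 * Real.log (∑' p, pairWeight t β p)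
  rcases eq_or_ne S ⊤ with hS_top | hS_top
  · have hZ : (fun n : ℕ => Real.log (Zpart t β n).toReal / n) =ᶠ[atTop] fun _ => 0 :=
      eventually_atTop.2 ⟨1, fun n hn => by simp [Zpart_eq_top t β ht hS_top (by omega : n ≠ 0)]⟩
    rw [hS, hS_top, tendsto_nhds_unique (hL.congr' hZ) tendsto_const_nhds]
    simp
  · have h := le_log_div_of_tendsto_log_div two_pos hS_top (Zpart_pos t β ht)
      (Zpart_two_mul_le t β ht) hL
    rw [hS]
    linarith
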